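/- arXiv:2211.09100 — 5 statements merged into one kernel-verified Lean document; each statement's English description precedes it below -/
import Mathlib

section
/- Let d ≥ 1, λ > 0, C_g > 0, t ≥ 1, and let g_0, …, g_{t-1} ∈ ℝ^d satisfy ‖g_i‖₂ ≤ C_g for all 0 ≤ i ≤ t-1. Define Σ_t = λI + Σ_{i=0}^{t-1} g_i g_iᵀ and Σ_0 = λI. Then log(det Σ_t / det Σ_0) ≤ d · log(1 + t·C_g² / (d·λ)). -/
open Matrix Finset

/-! AM–GM on the (nonnegative) eigenvalues of `Σ_t` gives `det Σ_t ≤ (tr Σ_t / d) ^ d`, and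
`tr Σ_t = d λ + ∑ ‖g_i‖² ≤ d λ + t C_g²`; dividing by `det Σ_0 = λ ^ d` and taking logarithms
gives the bound. -/

theorem Real.prod_le_arith_mean_pow {ι : Type*} (s : Finset ι) {z : ι → ℝ}
    (hz : ∀ i ∈ s, 0 ≤ z i) : ∏ i ∈ s, z i ≤ ((∑ i ∈ s, z i) / #s) ^ #s := by
  rcases s.eq_empty_or_nonempty with rfl | hs
  · simp
  have hcard : #s ≠ 0 := hs.card_pos.ne'
  have amgm := Real.geom_mean_le_arith_mean s (fun _ ↦ 1) z (fun _ _ ↦ zero_le_one)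
    (by simpa using hs) hz
  simp only [Real.rpow_one, sum_const, nsmul_eq_mul, mul_one, one_mul] at amgm
  calc ∏ i ∈ s, z i = ((∏ i ∈ s, z i) ^ ((#s : ℝ)⁻¹)) ^ #s :=
        (Real.rpow_inv_natCast_pow (prod_nonneg hz) hcard).symm
    _ ≤ ((∑ i ∈ s, z i) / #s) ^ #s := by
      gcongr
      exact Real.rpow_nonneg (prod_nonneg hz) _

theorem Matrix.PosSemidef.det_le_trace_div_card_pow {n : Type*} [Fintype n] [DecidableEq n]
    {A : Matrix n n ℝ} (hA : A.PosSemidef) :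
    A.det ≤ (A.trace / Fintype.card n) ^ Fintype.card n := by
  rw [hA.isHermitian.det_eq_prod_eigenvalues, hA.isHermitian.trace_eq_sum_eigenvalues]
  simpa using Real.prod_le_arith_mean_pow univ fun i _ ↦ hA.eigenvalues_nonneg i

theorem Matrix.posSemidef_sum_vecMulVec_self {n ι : Type*} [Fintype n] (s : Finset ι)
    (g : ι → n → ℝ) : (∑ i ∈ s, vecMulVec (g i) (g i)).PosSemidef :=
  posSemidef_sum s fun i _ ↦ by simpa using posSemidef_vecMulVec_self_star (g i)

theorem Matrix.trace_sum_vecMulVec_self_le {n ι : Type*} [Fintype n] (s : Finset ι)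
    (g : ι → n → ℝ) {C : ℝ} (hg : ∀ i ∈ s, √(g i ⬝ᵥ g i) ≤ C) :
    (∑ i ∈ s, vecMulVec (g i) (g i)).trace ≤ #s * C ^ 2 := by
  rw [trace_sum, ← nsmul_eq_mul]
  refine sum_le_card_nsmul s _ _ fun i hi ↦ ?_
  rw [trace_vecMulVec]
  exact (Real.sqrt_le_iff.mp (hg i hi)).2

theorem log_det_bound_general
    (d : ℕ) (lam Cg : ℝ) (hlam : 0 < lam)
    (t : ℕ) (g : ℕ → Fin d → ℝ)
    (hg : ∀ i < t, Real.sqrt (g i ⬝ᵥ g i) ≤ Cg)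
    (St S0 : Matrix (Fin d) (Fin d) ℝ)
    (hSt : St = lam • (1 : Matrix (Fin d) (Fin d) ℝ) +
      ∑ i ∈ Finset.range t, vecMulVec (g i) (g i))
    (hS0 : S0 = lam • (1 : Matrix (Fin d) (Fin d) ℝ)) :
    Real.log (St.det / S0.det) ≤ d * Real.log (1 + t * Cg ^ 2 / (d * lam)) := by
  have hpsd := posSemidef_sum_vecMulVec_self (range t) g
  have hSt_pos : St.PosDef := hSt ▸ (PosDef.one.smul hlam).add_posSemidef hpsd
  have hS0_det : S0.det = lam ^ d := by simp [hS0]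
  have htrace : St.trace ≤ d * lam + t * Cg ^ 2 := by
    have := trace_sum_vecMulVec_self_le (range t) g fun i hi ↦ hg i (mem_range.mp hi)
    simp only [hSt, trace_add, trace_smul, trace_one, Fintype.card_fin, card_range,
      smul_eq_mul] at this ⊢
    linarith
  have hmean : St.trace / (d * lam) ≤ 1 + t * Cg ^ 2 / (d * lam) := calc
    St.trace / (d * lam) ≤ (d * lam + t * Cg ^ 2) / (d * lam) := by gcongr
    -- `div_self_le_one` rather than `div_self`: at `d = 0` the quotient is `0 / 0 = 0`
    _ ≤ 1 + t * Cg ^ 2 / (d * lam) := by rw [add_div]; gcongr; exact div_self_le_one _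
  have hratio : St.det / S0.det ≤ (1 + t * Cg ^ 2 / (d * lam)) ^ d := calc
    St.det / S0.det ≤ (St.trace / d) ^ d / lam ^ d := by
      rw [hS0_det]; gcongr; simpa using hSt_pos.posSemidef.det_le_trace_div_card_pow
    _ = (St.trace / (d * lam)) ^ d := by rw [← div_pow, div_div]
    _ ≤ (1 + t * Cg ^ 2 / (d * lam)) ^ d := by
      gcongr; exact div_nonneg hSt_pos.posSemidef.trace_nonneg (by positivity)
  calc Real.log (St.det / S0.det) ≤ Real.log ((1 + t * Cg ^ 2 / (d * lam)) ^ d) :=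
        Real.log_le_log (div_pos hSt_pos.det_pos (hS0_det ▸ by positivity)) hratio
    _ = d * Real.log (1 + t * Cg ^ 2 / (d * lam)) := Real.log_pow _ _

/-- Log-determinant bound: if `‖g_i‖₂ ≤ C_g` for all `i < t`, then for
`Σ_t = λI + ∑_{i<t} g_i g_iᵀ` and `Σ_0 = λI`,
`log(det Σ_t / det Σ_0) ≤ d log(1 + t C_g²/(d λ))`. -/
theorem log_det_bound
    (d : ℕ) (hd : 1 ≤ d) (lam Cg : ℝ) (hlam : 0 < lam) (hCg : 0 < Cg)
    (t : ℕ) (ht : 1 ≤ t) (g : ℕ → Fin d → ℝ)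
    (hg : ∀ i < t, Real.sqrt (g i ⬝ᵥ g i) ≤ Cg)
    (St S0 : Matrix (Fin d) (Fin d) ℝ)
    (hSt : St = lam • (1 : Matrix (Fin d) (Fin d) ℝ) +
      ∑ i ∈ Finset.range t, vecMulVec (g i) (g i))
    (hS0 : S0 = lam • (1 : Matrix (Fin d) (Fin d) ℝ)) :
    Real.log (St.det / S0.det) ≤ d * Real.log (1 + t * Cg ^ 2 / (d * lam)) :=
  log_det_bound_general d lam Cg hlam t g hg St S0 hSt hS0
end

section
/- Let d ≥ 1, λ > 0, C_g > 0, t ≥ 1, and let g_0, …, g_{t-1} ∈ ℝ^d satisfy ‖g_i‖₂ ≤ C_g for all 0 ≤ i ≤ t-1. Define Σ_t = λI + Σ_{i=0}^{t-1} g_i g_iᵀ. Then Σ_{i=0}^{t-1} g_iᵀ Σ_t^{-1} g_i ≤ 2d · log(1 + t·C_g² / (d·λ)). -/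
open Matrix Finset

/-
The Gram-type matrix `A = λI + ∑ gᵢgᵢᵀ` dominates `λI`, so each term `gᵢᵀA⁻¹gᵢ` is at most
`‖gᵢ‖²/λ`; and the terms add up to `tr(A⁻¹(A - λI)) = d - λ tr A⁻¹ ≤ d`. Hence the sum is at most
`d · min(x, 1)` with `x = tC_g²/(dλ)`, and `min(x, 1) ≤ 2x/(1 + x) ≤ 2 log(1 + x)`.
-/

lemma Real.min_le_two_mul_log_one_add {x : ℝ} (hx : 0 ≤ x) : min x 1 ≤ 2 * Real.log (1 + x) := by
  have hlog : 1 - (1 + x)⁻¹ ≤ Real.log (1 + x) := Real.one_sub_inv_le_log_of_pos (by positivity)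
  have hfrac : 1 - (1 + x)⁻¹ = x / (1 + x) := by field_simp; ring
  have hmin : min x 1 ≤ 2 * (x / (1 + x)) := by
    rw [mul_div_assoc', le_div_iff₀ (by positivity)]
    rcases le_total x 1 with h | h
    · rw [min_eq_left h]; nlinarith
    · rw [min_eq_right h]; linarith
  linarith

namespace Matrix

variable {n ι : Type*}

lemma posDef_smul_one_add_posSemidef [DecidableEq n] {lam : ℝ} (hlam : 0 < lam)
    {B : Matrix n n ℝ} (hB : B.PosSemidef) : (lam • 1 + B).PosDef :=
  (PosDef.one.smul hlam).add_posSemidef hB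

variable [Fintype n]

lemma sum_dotProduct_mulVec_eq_trace_mul_sum_vecMulVec (M : Matrix n n ℝ) (s : Finset ι)
    (g : ι → n → ℝ) :
    ∑ i ∈ s, g i ⬝ᵥ (M *ᵥ g i) = trace (M * ∑ i ∈ s, vecMulVec (g i) (g i)) := by
  simp only [Finset.mul_sum, trace_sum, mul_vecMulVec, trace_vecMulVec, dotProduct_comm]

lemma posSemidef_sum_vecMulVec_self_s3 (s : Finset ι) (g : ι → n → ℝ) :
    (∑ i ∈ s, vecMulVec (g i) (g i)).PosSemidef :=
  posSemidef_sum s fun i _ => posSemidef_vecMulVec_self_star (g i)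

variable [DecidableEq n] {lam : ℝ}

lemma mul_dotProduct_inv_smul_one_add_mulVec_le (hlam : 0 < lam) {B : Matrix n n ℝ}
    (hB : B.PosSemidef) (v : n → ℝ) :
    lam * (v ⬝ᵥ ((lam • 1 + B)⁻¹ *ᵥ v)) ≤ v ⬝ᵥ v := by
  set A := lam • 1 + B
  set y := A⁻¹ *ᵥ v
  have hAy : A *ᵥ y = v := by
    rw [mulVec_mulVec, mul_nonsing_inv _ ((isUnit_iff_isUnit_det A).mp
      (posDef_smul_one_add_posSemidef hlam hB).isUnit), one_mulVec]
  have hyBy : 0 ≤ y ⬝ᵥ (B *ᵥ y) := by simpa using hB.dotProduct_mulVec_nonneg y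
  have hvy : lam * (y ⬝ᵥ y) ≤ v ⬝ᵥ y := by
    rw [← hAy, add_mulVec, add_dotProduct, smul_mulVec, one_mulVec, smul_dotProduct,
      smul_eq_mul, dotProduct_comm (B *ᵥ y)]
    linarith
  -- completing the square: `λ v⬝y ≤ 2λ v⬝y - λ²‖y‖² ≤ ‖v‖²`
  have hsq : 0 ≤ (v - lam • y) ⬝ᵥ (v - lam • y) := Fintype.sum_nonneg fun i => mul_self_nonneg _
  simp only [sub_dotProduct, dotProduct_sub, smul_dotProduct, dotProduct_smul, smul_eq_mul,
    dotProduct_comm y v] at hsq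
  nlinarith

lemma sum_dotProduct_inv_mulVec_le_card_mul {C : ℝ} (hlam : 0 < lam) (s : Finset ι)
    (g : ι → n → ℝ) (hC : ∀ i ∈ s, g i ⬝ᵥ g i ≤ C) :
    ∑ i ∈ s, g i ⬝ᵥ ((lam • 1 + ∑ i ∈ s, vecMulVec (g i) (g i))⁻¹ *ᵥ g i) ≤ #s * (C / lam) := by
  rw [← nsmul_eq_mul]
  refine sum_le_card_nsmul _ _ _ fun i hi => ?_
  rw [le_div_iff₀' hlam]
  exact (mul_dotProduct_inv_smul_one_add_mulVec_le hlam
    (posSemidef_sum_vecMulVec_self_s3 s g) (g i)).trans (hC i hi)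

lemma sum_dotProduct_inv_mulVec_eq (hlam : 0 < lam) (s : Finset ι) (g : ι → n → ℝ) :
    ∑ i ∈ s, g i ⬝ᵥ ((lam • 1 + ∑ i ∈ s, vecMulVec (g i) (g i))⁻¹ *ᵥ g i) =
      Fintype.card n - lam * trace (lam • 1 + ∑ i ∈ s, vecMulVec (g i) (g i))⁻¹ := by
  set A := lam • 1 + ∑ i ∈ s, vecMulVec (g i) (g i)
  have hA : IsUnit A.det := (isUnit_iff_isUnit_det A).mp
    (posDef_smul_one_add_posSemidef hlam (posSemidef_sum_vecMulVec_self_s3 s g)).isUnit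
  have hsum : ∑ i ∈ s, vecMulVec (g i) (g i) = A - lam • 1 := by simp [A]
  rw [sum_dotProduct_mulVec_eq_trace_mul_sum_vecMulVec, hsum, mul_sub, nonsing_inv_mul _ hA,
    Matrix.mul_smul, mul_one, trace_sub, trace_one, trace_smul, smul_eq_mul]

lemma sum_dotProduct_inv_mulVec_le_card (hlam : 0 < lam) (s : Finset ι) (g : ι → n → ℝ) :
    ∑ i ∈ s, g i ⬝ᵥ ((lam • 1 + ∑ i ∈ s, vecMulVec (g i) (g i))⁻¹ *ᵥ g i) ≤ Fintype.card n := by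
  have htr := (posDef_smul_one_add_posSemidef hlam
    (posSemidef_sum_vecMulVec_self_s3 s g)).inv.posSemidef.trace_nonneg
  rw [sum_dotProduct_inv_mulVec_eq hlam]
  nlinarith

end Matrix

theorem sum_quadratic_inv_bound_general
    (d : ℕ) (lam Cg : ℝ) (hlam : 0 < lam)
    (t : ℕ) (g : ℕ → Fin d → ℝ)
    (hg : ∀ i < t, Real.sqrt (g i ⬝ᵥ g i) ≤ Cg)
    (St : Matrix (Fin d) (Fin d) ℝ)
    (hSt : St = lam • (1 : Matrix (Fin d) (Fin d) ℝ) +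
      ∑ i ∈ Finset.range t, vecMulVec (g i) (g i)) :
    ∑ i ∈ Finset.range t, g i ⬝ᵥ (St⁻¹ *ᵥ g i) ≤
      2 * d * Real.log (1 + t * Cg ^ 2 / (d * lam)) := by
  subst hSt
  rcases Nat.eq_zero_or_pos d with rfl | hd
  · simp
  have hS_norm := sum_dotProduct_inv_mulVec_le_card_mul hlam (range t) g
    fun i hi => (Real.sqrt_le_iff.mp (hg i (mem_range.mp hi))).2
  have hS_card := sum_dotProduct_inv_mulVec_le_card hlam (range t) g
  rw [card_range] at hS_norm
  rw [Fintype.card_fin] at hS_card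
  calc _ ≤ (d : ℝ) * min (t * Cg ^ 2 / (d * lam)) 1 := by
        have hdx : (d : ℝ) * (t * Cg ^ 2 / (d * lam)) = t * (Cg ^ 2 / lam) := by field_simp
        rw [mul_min_of_nonneg _ _ d.cast_nonneg, mul_one, hdx]
        exact le_min hS_norm hS_card
    _ ≤ d * (2 * Real.log (1 + t * Cg ^ 2 / (d * lam))) := by
        gcongr; exact Real.min_le_two_mul_log_one_add (by positivity)
    _ = _ := by ring

/-- Elliptical potential bound: if `‖g_i‖₂ ≤ C_g` for all `i < t`, then for
`Σ_t = λI + ∑_{i<t} g_i g_iᵀ`,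
`∑_{i<t} g_iᵀ Σ_t⁻¹ g_i ≤ 2 d log(1 + t C_g²/(d λ))`. -/
theorem sum_quadratic_inv_bound
    (d : ℕ) (hd : 1 ≤ d) (lam Cg : ℝ) (hlam : 0 < lam) (hCg : 0 < Cg)
    (t : ℕ) (ht : 1 ≤ t) (g : ℕ → Fin d → ℝ)
    (hg : ∀ i < t, Real.sqrt (g i ⬝ᵥ g i) ≤ Cg)
    (St : Matrix (Fin d) (Fin d) ℝ)
    (hSt : St = lam • (1 : Matrix (Fin d) (Fin d) ℝ) +
      ∑ i ∈ Finset.range t, vecMulVec (g i) (g i)) :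
    ∑ i ∈ Finset.range t, g i ⬝ᵥ (St⁻¹ *ᵥ g i) ≤
      2 * d * Real.log (1 + t * Cg ^ 2 / (d * lam)) :=
  sum_quadratic_inv_bound_general d lam Cg hlam t g hg St hSt
end

section
/- Let d ≥ 1, λ > 0, C_h ≥ 0, β ≥ 0. Let Σ be a symmetric real d×d matrix satisfying xᵀΣx ≥ λ‖x‖₂² for all x ∈ ℝ^d (so Σ is positive definite). Let ŵ ∈ ℝ^d and define Ball = {w ∈ ℝ^d : (w-ŵ)ᵀΣ(w-ŵ) ≤ β}. Let X be a nonempty set and let f : X × ℝ^d → ℝ be such that for every x ∈ X the map w ↦ f(x,w) is twice continuously differentiable with ‖∇²_w f(x,w)‖_op ≤ C_h for all w ∈ ℝ^d. Suppose w* ∈ Ball, x* ∈ X, x_t ∈ X, and there exists w̃ ∈ Ball with f(x_t, w̃) ≥ f(x*, w*). Then f(x*, w*) − f(x_t, w*) ≤ 2√β · ‖∇_w f(x_t, ŵ)‖_{Σ^{-1}} + 2βC_h/λ. -/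
open Matrix Set

/-! Expand `f xt` to first order around `ŵ`. On the confidence ball the Hessian bound makes the
remainder at most `C_h ‖w - ŵ‖² ≤ C_h β / λ`, and Cauchy–Schwarz in the `Σ`-inner product bounds
the linear term by `√β ‖∇f(x_t, ŵ)‖_{Σ⁻¹}`. Optimism gives
`f(x*, w*) - f(x_t, w*) ≤ f(x_t, w̃) - f(x_t, w*)`, and both `w̃` and `w*` lie in the ball, so the
difference of the two expansions yields the bound. -/

-- The crude constant `M` (instead of Taylor's `M / 2`) is all the regret bound needs.
theorem norm_sub_sub_deriv_le_of_norm_deriv2_le {E : Type*} [NormedAddCommGroup E]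
    [NormedSpace ℝ E] {φ φ' φ'' : ℝ → E} {M : ℝ}
    (hφ : ∀ s ∈ Icc (0 : ℝ) 1, HasDerivWithinAt φ (φ' s) (Icc 0 1) s)
    (hφ' : ∀ s ∈ Icc (0 : ℝ) 1, HasDerivWithinAt φ' (φ'' s) (Icc 0 1) s)
    (hM : ∀ s ∈ Icc (0 : ℝ) 1, ‖φ'' s‖ ≤ M) :
    ‖φ 1 - φ 0 - φ' 0‖ ≤ M := by
  have h0 : (0 : ℝ) ∈ Icc 0 1 := left_mem_Icc.mpr zero_le_one
  have h1 : (1 : ℝ) ∈ Icc 0 1 := right_mem_Icc.mpr zero_le_one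
  have hM0 : 0 ≤ M := (norm_nonneg _).trans (hM 0 h0)
  have hφ'_sub : ∀ s ∈ Icc (0 : ℝ) 1, ‖φ' s - φ' 0‖ ≤ M := fun s hs => by
    have := (convex_Icc (0 : ℝ) 1).norm_image_sub_le_of_norm_hasDerivWithin_le hφ' hM h0 hs
    rw [sub_zero, Real.norm_of_nonneg hs.1] at this
    nlinarith [hs.2]
  have hχ : ∀ s ∈ Icc (0 : ℝ) 1,
      HasDerivWithinAt (fun s => φ s - s • φ' 0) (φ' s - φ' 0) (Icc 0 1) s := fun s hs => by
    have h := (hφ s hs).sub ((hasDerivWithinAt_id s _).smul_const (φ' 0))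
    rwa [one_smul] at h
  simpa [sub_sub, add_comm (φ' 0)] using
    (convex_Icc (0 : ℝ) 1).norm_image_sub_le_of_norm_hasDerivWithin_le hχ hφ'_sub h0 h1

theorem norm_image_add_sub_sub_fderiv_le {E F : Type*} [NormedAddCommGroup E] [NormedSpace ℝ E]
    [NormedAddCommGroup F] [NormedSpace ℝ F] {g : E → F} (hg : ContDiff ℝ 2 g) (x u : E) {M : ℝ}
    (hM : ∀ s ∈ Icc (0 : ℝ) 1, ‖fderiv ℝ (fderiv ℝ g) (x + s • u) u u‖ ≤ M) :
    ‖g (x + u) - g x - fderiv ℝ g x u‖ ≤ M := by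
  have hline : ∀ s : ℝ, HasDerivAt (fun s : ℝ => x + s • u) u s := fun s => by
    simpa using ((hasDerivAt_id s).smul_const u).const_add x
  have hdg : Differentiable ℝ (fderiv ℝ g) :=
    (hg.fderiv_right (m := 1) (by norm_num)).differentiable one_ne_zero
  have hφ : ∀ s : ℝ, HasDerivAt (fun s => g (x + s • u)) (fderiv ℝ g (x + s • u) u) s :=
    fun s => ((hg.differentiable (by norm_num) _).hasFDerivAt).comp_hasDerivAt s (hline s)
  have hφ' : ∀ s : ℝ, HasDerivAt (fun s => fderiv ℝ g (x + s • u) u)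
      (fderiv ℝ (fderiv ℝ g) (x + s • u) u u) s := fun s =>
    (((hdg _).hasFDerivAt).comp_hasDerivAt s (hline s)).clm_apply (hasDerivAt_const s u)
      |>.congr_deriv (by simp)
  simpa using norm_sub_sub_deriv_le_of_norm_deriv2_le (fun s _ => (hφ s).hasDerivWithinAt)
    (fun s _ => (hφ' s).hasDerivWithinAt) hM

theorem LinearMap.apply_eq_dotProduct_single {n R : Type*} [Fintype n] [DecidableEq n]
    [CommSemiring R] (L : (n → R) →ₗ[R] R) (u : n → R) :
    L u = (fun i => L (Pi.single i 1)) ⬝ᵥ u := by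
  have hsingle : ∀ i, (fun j : n => if i = j then (1 : R) else 0) = Pi.single i 1 :=
    fun i => funext fun j => by simp only [Pi.single_apply, @eq_comm _ j i]
  simp only [L.pi_apply_eq_sum_univ u, hsingle, dotProduct, smul_eq_mul, mul_comm]

namespace Matrix

variable {n : Type*} [Fintype n]

theorem posDef_of_mul_dotProduct_self_le {S : Matrix n n ℝ} {lam : ℝ} (hlam : 0 < lam)
    (hS : S.IsSymm) (h : ∀ x : n → ℝ, lam * (x ⬝ᵥ x) ≤ x ⬝ᵥ (S *ᵥ x)) : S.PosDef :=
  .of_dotProduct_mulVec_pos (isHermitian_iff_isSymm.mpr hS) fun x hx => by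
    have hxx : 0 < x ⬝ᵥ x :=
      (by simpa using dotProduct_star_self_nonneg x : 0 ≤ x ⬝ᵥ x).lt_of_ne' (by simpa using hx)
    simpa using (mul_pos hlam hxx).trans_le (h x)

theorem PosSemidef.dotProduct_mulVec_sq_le {S : Matrix n n ℝ} (hS : S.PosSemidef) (a b : n → ℝ) :
    (a ⬝ᵥ (S *ᵥ b)) ^ 2 ≤ (a ⬝ᵥ (S *ᵥ a)) * (b ⬝ᵥ (S *ᵥ b)) := by
  -- Local instances replacing the sup norm on `n → ℝ` by the `S`-seminorm.
  let _ := S.toSeminormedAddCommGroup hS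
  let _ := S.toInnerProductSpace hS
  have hinner : ∀ x y : n → ℝ, inner ℝ x y = x ⬝ᵥ (S *ᵥ y) := fun x y => by
    change (S *ᵥ y) ⬝ᵥ star x = _
    rw [star_trivial, dotProduct_comm]
  simpa only [hinner, sq] using real_inner_mul_inner_self_le a b

theorem PosDef.abs_dotProduct_le [DecidableEq n] {S : Matrix n n ℝ} (hS : S.PosDef)
    (g u : n → ℝ) : |g ⬝ᵥ u| ≤ √(u ⬝ᵥ (S *ᵥ u)) * √(g ⬝ᵥ (S⁻¹ *ᵥ g)) := by
  have hSS : S *ᵥ (S⁻¹ *ᵥ g) = g := by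
    rw [mulVec_mulVec, mul_nonsing_inv _ ((isUnit_iff_isUnit_det S).mp hS.isUnit), one_mulVec]
  have hcs := hS.posSemidef.dotProduct_mulVec_sq_le u (S⁻¹ *ᵥ g)
  rw [hSS, dotProduct_comm u, dotProduct_comm _ g] at hcs
  have hu : 0 ≤ u ⬝ᵥ (S *ᵥ u) := by simpa using hS.posSemidef.dotProduct_mulVec_nonneg u
  rw [← Real.sqrt_mul hu]
  exact Real.abs_le_sqrt hcs

end Matrix

theorem instantaneous_regret_bound_general
    (d : ℕ) (lam Ch β : ℝ) (hlam : 0 < lam) (hCh : 0 ≤ Ch)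
    (S : Matrix (Fin d) (Fin d) ℝ) (hSsymm : S.IsSymm)
    (hSlow : ∀ x : Fin d → ℝ, lam * (x ⬝ᵥ x) ≤ x ⬝ᵥ (S *ᵥ x))
    (what : Fin d → ℝ)
    (X : Type*)
    (f : X → (Fin d → ℝ) → ℝ)
    (hsmooth : ∀ x, ContDiff ℝ 2 (f x))
    (hhess : ∀ (x : X) (w u v : Fin d → ℝ),
      |fderiv ℝ (fderiv ℝ (f x)) w u v| ≤ Ch * Real.sqrt (u ⬝ᵥ u) * Real.sqrt (v ⬝ᵥ v))
    (wstar : Fin d → ℝ) (hwstar : (wstar - what) ⬝ᵥ (S *ᵥ (wstar - what)) ≤ β)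
    (xstar xt : X)
    (wtil : Fin d → ℝ) (hwtil : (wtil - what) ⬝ᵥ (S *ᵥ (wtil - what)) ≤ β)
    (hopt : f xstar wstar ≤ f xt wtil) :
    f xstar wstar - f xt wstar ≤
      2 * Real.sqrt β *
        Real.sqrt ((fun i => fderiv ℝ (f xt) what (Pi.single i 1)) ⬝ᵥ
          (S⁻¹ *ᵥ fun i => fderiv ℝ (f xt) what (Pi.single i 1))) +
      2 * β * Ch / lam := by
  set G : Fin d → ℝ := fun i => fderiv ℝ (f xt) what (Pi.single i 1)
  have hS : S.PosDef := posDef_of_mul_dotProduct_self_le hlam hSsymm hSlow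
  have hremainder : ∀ w, (w - what) ⬝ᵥ (S *ᵥ (w - what)) ≤ β →
      |f xt w - f xt what - G ⬝ᵥ (w - what)| ≤ β * Ch / lam := fun w hw => by
    set u := w - what
    have huu : 0 ≤ u ⬝ᵥ u := by simpa using dotProduct_star_self_nonneg u
    have htaylor := norm_image_add_sub_sub_fderiv_le (hsmooth xt) what u (M := Ch * (u ⬝ᵥ u))
      fun s _ => by
        simpa only [Real.norm_eq_abs, mul_assoc, Real.mul_self_sqrt huu] using hhess xt _ u u
    have hgrad : fderiv ℝ (f xt) what u = G ⬝ᵥ u :=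
      (fderiv ℝ (f xt) what).toLinearMap.apply_eq_dotProduct_single u
    rw [add_sub_cancel, hgrad, Real.norm_eq_abs] at htaylor
    calc |f xt w - f xt what - G ⬝ᵥ u| ≤ Ch * (u ⬝ᵥ u) := htaylor
      _ ≤ β * Ch / lam := by
        rw [le_div_iff₀ hlam]
        nlinarith [(hSlow u).trans hw]
  have hlinear : ∀ w, (w - what) ⬝ᵥ (S *ᵥ (w - what)) ≤ β →
      |G ⬝ᵥ (w - what)| ≤ √β * √(G ⬝ᵥ (S⁻¹ *ᵥ G)) := fun w hw =>
    (hS.abs_dotProduct_le G _).trans (by gcongr)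
  obtain ⟨-, hrem_til⟩ := abs_le.mp (hremainder _ hwtil)
  obtain ⟨hrem_star, -⟩ := abs_le.mp (hremainder _ hwstar)
  obtain ⟨-, hlin_til⟩ := abs_le.mp (hlinear _ hwtil)
  obtain ⟨hlin_star, -⟩ := abs_le.mp (hlinear _ hwstar)
  linarith [show 2 * β * Ch / lam = β * Ch / lam + β * Ch / lam by ring]

/-- Deterministic instantaneous-regret bound (Lemma 5.7): if `w*` lies in the
confidence ball `{w : (w-ŵ)ᵀΣ(w-ŵ) ≤ β}` and `(x_t, w̃)` is chosen optimistically
(`w̃` in the ball with `f(x_t,w̃) ≥ f(x*,w*)`), then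
`f(x*,w*) − f(x_t,w*) ≤ 2√β ‖∇_w f(x_t,ŵ)‖_{Σ⁻¹} + 2βC_h/λ`. -/
theorem instantaneous_regret_bound
    (d : ℕ) (hd : 1 ≤ d) (lam Ch β : ℝ) (hlam : 0 < lam) (hCh : 0 ≤ Ch) (hβ : 0 ≤ β)
    (S : Matrix (Fin d) (Fin d) ℝ) (hSsymm : S.IsSymm)
    (hSlow : ∀ x : Fin d → ℝ, lam * (x ⬝ᵥ x) ≤ x ⬝ᵥ (S *ᵥ x))
    (what : Fin d → ℝ)
    (X : Type*) (hX : Nonempty X)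
    (f : X → (Fin d → ℝ) → ℝ)
    (hsmooth : ∀ x, ContDiff ℝ 2 (f x))
    (hhess : ∀ (x : X) (w u v : Fin d → ℝ),
      |fderiv ℝ (fderiv ℝ (f x)) w u v| ≤ Ch * Real.sqrt (u ⬝ᵥ u) * Real.sqrt (v ⬝ᵥ v))
    (wstar : Fin d → ℝ) (hwstar : (wstar - what) ⬝ᵥ (S *ᵥ (wstar - what)) ≤ β)
    (xstar xt : X)
    (wtil : Fin d → ℝ) (hwtil : (wtil - what) ⬝ᵥ (S *ᵥ (wtil - what)) ≤ β)
    (hopt : f xstar wstar ≤ f xt wtil) :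
    f xstar wstar - f xt wstar ≤
      2 * Real.sqrt β *
        Real.sqrt ((fun i => fderiv ℝ (f xt) what (Pi.single i 1)) ⬝ᵥ
          (S⁻¹ *ᵥ fun i => fderiv ℝ (f xt) what (Pi.single i 1))) +
      2 * β * Ch / lam :=
  instantaneous_regret_bound_general d lam Ch β hlam hCh S hSsymm hSlow what X f hsmooth hhess wstar
    hwstar xstar xt wtil hwtil hopt
end

section
/- Let d ≥ 1, let μ, τ, ζ, ε > 0, let γ ∈ (0,2), let L : ℝ^d → ℝ, let w*, ŵ ∈ ℝ^d, and let H be a symmetric positive semidefinite real d×d matrix with xᵀHx ≤ ζ‖x‖₂² for all x ∈ ℝ^d. Suppose min{ (μ/2)‖ŵ−w*‖₂², (τ/2)‖ŵ−w*‖₂^γ } ≤ L(ŵ) − L(w*) ≤ ε, and suppose ε ≤ min{ τ / (2^{γ+1} ζ^{γ/2}), μ / (8ζ) }. Then √((ŵ−w*)ᵀ H (ŵ−w*)) ≤ 1/2. -/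
open Matrix

/-- Deterministic content of the lemma in the proof of Theorem 5.2: under the
`(τ,γ)`-growth / local `μ`-strong convexity condition, the operator-norm bound
`xᵀHx ≤ ζ‖x‖₂²`, and a small enough excess risk `ε`, one has
`‖ŵ − w*‖_H ≤ 1/2`. -/
theorem hessian_norm_half
    (d : ℕ) (hd : 1 ≤ d) (μ τ ζ ε : ℝ) (hμ : 0 < μ) (hτ : 0 < τ) (hζ : 0 < ζ)
    (hε : 0 < ε) (γ : ℝ) (hγ0 : 0 < γ) (hγ2 : γ < 2)
    (L : (Fin d → ℝ) → ℝ) (wstar what : Fin d → ℝ)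
    (H : Matrix (Fin d) (Fin d) ℝ) (hH : H.PosSemidef)
    (hHop : ∀ x : Fin d → ℝ, x ⬝ᵥ (H *ᵥ x) ≤ ζ * (x ⬝ᵥ x))
    (hlow : min (μ / 2 * ((what - wstar) ⬝ᵥ (what - wstar)))
        (τ / 2 * Real.sqrt ((what - wstar) ⬝ᵥ (what - wstar)) ^ γ)
      ≤ L what - L wstar)
    (hup : L what - L wstar ≤ ε)
    (hεsmall : ε ≤ min (τ / (2 ^ (γ + 1) * ζ ^ (γ / 2))) (μ / (8 * ζ))) :
    Real.sqrt ((what - wstar) ⬝ᵥ (H *ᵥ (what - wstar))) ≤ 1 / 2 := by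
  set v := what - wstar with hv
  set s := v ⬝ᵥ v with hs
  have hs0 : 0 ≤ s := by
    simp only [hs, dotProduct]
    exact Finset.sum_nonneg fun i _ => mul_self_nonneg _
  have hsqζ : 0 < Real.sqrt ζ := Real.sqrt_pos.mpr hζ
  -- main claim: s ≤ 1/(4ζ)
  have hkey : s ≤ 1 / (4 * ζ) := by
    have hmin : min (μ / 2 * s) (τ / 2 * Real.sqrt s ^ γ) ≤ ε := le_trans hlow hup
    rcases min_le_iff.mp hmin with h | h
    · -- strong-convexity branch
      have h1 : ε ≤ μ / (8 * ζ) := le_trans hεsmall (min_le_right _ _)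
      have hms : μ / 2 * s ≤ μ / (8 * ζ) := le_trans h h1
      have h2 : μ / 2 * s * (8 * ζ) ≤ μ := by
        have := mul_le_mul_of_nonneg_right hms (by positivity : (0:ℝ) ≤ 8 * ζ)
        calc μ / 2 * s * (8 * ζ) ≤ μ / (8 * ζ) * (8 * ζ) := this
          _ = μ := by field_simp
      rw [le_div_iff₀ (by positivity)]
      nlinarith [h2, hμ]
    · -- growth branch
      have h1 : ε ≤ τ / (2 ^ (γ + 1) * ζ ^ (γ / 2)) :=
        le_trans hεsmall (min_le_left _ _)
      have h2 : Real.sqrt s ^ γ ≤ 2 * ε / τ := by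
        rw [le_div_iff₀ hτ]; linarith
      have h3 : (2 : ℝ) * ε / τ ≤ ((2 * Real.sqrt ζ)⁻¹) ^ γ := by
        have hne : (0:ℝ) < 2 ^ (γ + 1) * ζ ^ (γ / 2) := by positivity
        have h2γ : (0:ℝ) < (2:ℝ) ^ γ := Real.rpow_pos_of_pos (by norm_num) _
        have hζγ : (0:ℝ) < ζ ^ (γ / 2) := Real.rpow_pos_of_pos hζ _
        have heq : ((2 * Real.sqrt ζ)⁻¹ : ℝ) ^ γ
            = 2 / (2 ^ (γ + 1) * ζ ^ (γ / 2)) := by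
          rw [Real.inv_rpow (by positivity), Real.mul_rpow (by norm_num) hsqζ.le,
            Real.sqrt_eq_rpow, ← Real.rpow_mul hζ.le,
            show (1:ℝ) / 2 * γ = γ / 2 by ring,
            Real.rpow_add (by norm_num : (0:ℝ) < 2), Real.rpow_one]
          field_simp
        rw [heq, div_le_div_iff₀ hτ hne]
        have hmm := mul_le_mul_of_nonneg_right
          (mul_le_mul_of_nonneg_left h1 (by norm_num : (0:ℝ) ≤ 2)) hne.le
        have hne' : (2 ^ (γ + 1) * ζ ^ (γ / 2) : ℝ) ≠ 0 := hne.ne'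
        calc 2 * ε * (2 ^ (γ + 1) * ζ ^ (γ / 2))
            ≤ 2 * (τ / (2 ^ (γ + 1) * ζ ^ (γ / 2))) * (2 ^ (γ + 1) * ζ ^ (γ / 2)) := hmm
          _ = 2 * τ := by field_simp
      have h4 : Real.sqrt s ≤ (2 * Real.sqrt ζ)⁻¹ :=
        (Real.rpow_le_rpow_iff (Real.sqrt_nonneg _) (by positivity) hγ0).mp
          (le_trans h2 h3)
      have h5 : s = Real.sqrt s ^ (2:ℕ) := (Real.sq_sqrt hs0).symm
      have h6 : Real.sqrt s ^ (2:ℕ) ≤ ((2 * Real.sqrt ζ)⁻¹) ^ (2:ℕ) :=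
        pow_le_pow_left₀ (Real.sqrt_nonneg _) h4 2
      have h7 : (((2 * Real.sqrt ζ)⁻¹ : ℝ)) ^ (2:ℕ) = 1 / (4 * ζ) := by
        have : Real.sqrt ζ ^ (2:ℕ) = ζ := Real.sq_sqrt hζ.le
        field_simp
        nlinarith [this]
      rw [h5]; rw [h7] at h6; exact h6
  have hq : v ⬝ᵥ (H *ᵥ v) ≤ (1/2 : ℝ) ^ 2 := by
    calc v ⬝ᵥ (H *ᵥ v) ≤ ζ * s := hHop v
      _ ≤ ζ * (1 / (4 * ζ)) := mul_le_mul_of_nonneg_left hkey hζ.le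
      _ = (1/2 : ℝ)^2 := by field_simp; ring
  calc Real.sqrt (v ⬝ᵥ (H *ᵥ v)) ≤ Real.sqrt ((1/2:ℝ)^2) := Real.sqrt_le_sqrt hq
    _ = 1/2 := by rw [Real.sqrt_sq (by norm_num)]
end

section
/- Let d ≥ 1, let μ, τ, ζ, ε > 0, let γ ∈ (0,2), and let L : ℝ^d → ℝ be twice continuously differentiable. Let w* ∈ ℝ^d satisfy ∇L(w*) = 0, and write H = ∇²L(w*). Assume: (i) for all w ∈ ℝ^d, min{ (μ/2)‖w−w*‖₂², (τ/2)‖w−w*‖₂^γ } ≤ L(w) − L(w*); (ii) xᵀHx ≤ ζ‖x‖₂² for all x ∈ ℝ^d; (iii) μ‖x‖₂² ≤ xᵀHx for all x ∈ ℝ^d; (iv) for every w with √((w−w*)ᵀH(w−w*)) ≤ 1, one has (1 − √((w−w*)ᵀH(w−w*)))² · xᵀHx ≤ xᵀ∇²L(w)x for all x ∈ ℝ^d. Let ŵ ∈ ℝ^d satisfy L(ŵ) − L(w*) ≤ ε with ε ≤ min{ τ / (2^{γ+1} ζ^{γ/2}), μ / (8ζ) }. Then ‖ŵ − w*‖₂²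 ≤ 8ε/μ. -/
/-!
If the quadratic branch of the growth condition is active, `μ/2 ‖ŵ - w*‖² ≤ ε` already gives the
bound. Otherwise the smallness of `ε` forces `‖ŵ - w*‖² ≤ 1/(4ζ)`, hence `Q := H(v, v) ≤ 1/4` for
`v = ŵ - w*`. Along the segment `w* + t v` self-concordance then gives
`∇²L(w* + t v)(v, v) ≥ (1 - t√Q)² Q ≥ Q/4`, and a second-order Taylor bound with `∇L(w*) = 0`
yields `ε ≥ L(ŵ) - L(w*) ≥ Q/8 ≥ μ‖v‖²/8`.
-/

open Set

theorem add_half_le_of_le_deriv2 {g g' g'' : ℝ → ℝ} {c : ℝ}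
    (hg : ∀ t, HasDerivAt g (g' t) t) (hg' : ∀ t, HasDerivAt g' (g'' t) t)
    (h0 : g' 0 = 0) (hc : ∀ t ∈ Ico (0 : ℝ) 1, c ≤ g'' t) :
    g 0 + c / 2 ≤ g 1 := by
  have hlin : ∀ t ∈ Icc (0 : ℝ) 1, c * t ≤ g' t := by
    refine image_le_of_deriv_right_le_deriv_boundary (f' := fun _ => c)
      (by fun_prop) (fun t _ => ((hasDerivAt_id t).const_mul c).hasDerivWithinAt.congr_deriv ?_)
      (by simp [h0]) (fun t _ => (hg' t).continuousAt.continuousWithinAt)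
      (fun t _ => (hg' t).hasDerivWithinAt) hc
    simp
  have hquad := image_le_of_deriv_right_le_deriv_boundary (f := fun t => g 0 + c * t ^ 2 / 2)
    (f' := fun t => c * t) (by fun_prop)
    (fun t _ => (((hasDerivAt_pow 2 t).const_mul c).div_const 2).const_add (g 0)
      |>.hasDerivWithinAt.congr_deriv (by ring))
    (by simp) (fun t _ => (hg t).continuousAt.continuousWithinAt)
    (fun t _ => (hg t).hasDerivWithinAt) (fun t ht => hlin t (Ico_subset_Icc_self ht))
    (right_mem_Icc.mpr zero_le_one)
  simpa using hquad

variable {E F : Type*} [NormedAddCommGroup E] [NormedSpace ℝ E]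
  [NormedAddCommGroup F] [NormedSpace ℝ F]

theorem hasDerivAt_comp_add_smul {f : E → F} {w v : E} {t : ℝ}
    (hf : DifferentiableAt ℝ f (w + t • v)) :
    HasDerivAt (fun s : ℝ => f (w + s • v)) (fderiv ℝ f (w + t • v) v) t :=
  hf.hasFDerivAt.comp_hasDerivAt t <| by
    simpa using ((hasDerivAt_id t).smul_const v).const_add w

theorem add_half_le_of_le_hessian_on_segment {L : E → ℝ} (hL : ContDiff ℝ 2 L) {w v : E}
    (hgrad : fderiv ℝ L w = 0) {c : ℝ}
    (hc : ∀ t ∈ Ico (0 : ℝ) 1, c ≤ fderiv ℝ (fderiv ℝ L) (w + t • v) v v) :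
    L w + c / 2 ≤ L (w + v) := by
  have hdL : Differentiable ℝ L := hL.differentiable (by norm_num)
  have hdL' : Differentiable ℝ (fderiv ℝ L) :=
    (hL.fderiv_right (m := 1) (by norm_num)).differentiable (by norm_num)
  simpa using add_half_le_of_le_deriv2 (g := fun t => L (w + t • v))
    (fun t => hasDerivAt_comp_add_smul (hdL _))
    (fun t => (hasDerivAt_comp_add_smul (hdL' _)).clm_apply (hasDerivAt_const t v))
    (by simp [hgrad]) (by simpa using hc)

def SelfConcordantLowerAt (L : E → ℝ) (w₀ : E) : Prop :=
  ∀ w : E, √(fderiv ℝ (fderiv ℝ L) w₀ (w - w₀) (w - w₀)) ≤ 1 → ∀ x : E,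
    (1 - √(fderiv ℝ (fderiv ℝ L) w₀ (w - w₀) (w - w₀))) ^ 2 * fderiv ℝ (fderiv ℝ L) w₀ x x ≤
      fderiv ℝ (fderiv ℝ L) w x x

namespace SelfConcordantLowerAt

variable {L : E → ℝ} {w₀ v : E}

theorem quarter_le_hessian_add_smul (hsc : SelfConcordantLowerAt L w₀)
    (hQ0 : 0 ≤ fderiv ℝ (fderiv ℝ L) w₀ v v) (hQ : fderiv ℝ (fderiv ℝ L) w₀ v v ≤ 1 / 4)
    {t : ℝ} (ht : t ∈ Icc (0 : ℝ) 1) :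
    fderiv ℝ (fderiv ℝ L) w₀ v v / 4 ≤ fderiv ℝ (fderiv ℝ L) (w₀ + t • v) v v := by
  set Q := fderiv ℝ (fderiv ℝ L) w₀ v v
  have hsqrt : √(fderiv ℝ (fderiv ℝ L) w₀ (t • v) (t • v)) = t * √Q := by
    simp only [map_smul, _root_.smul_apply, smul_eq_mul]
    rw [← mul_assoc, ← sq, Real.sqrt_mul (sq_nonneg t), Real.sqrt_sq ht.1]
  have hhalf : t * √Q ≤ 1 / 2 := by
    have : √Q ≤ 1 / 2 := Real.sqrt_le_iff.mpr ⟨by norm_num, by linarith⟩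
    nlinarith [ht.1, ht.2, Real.sqrt_nonneg Q]
  have key := hsc (w₀ + t • v) (by rw [add_sub_cancel_left, hsqrt]; linarith) v
  rw [add_sub_cancel_left, hsqrt] at key
  have : 1 / 4 ≤ (1 - t * √Q) ^ 2 := by nlinarith [mul_nonneg ht.1 (Real.sqrt_nonneg Q)]
  nlinarith

theorem add_div_eight_le (hsc : SelfConcordantLowerAt L w₀) (hL : ContDiff ℝ 2 L)
    (hgrad : fderiv ℝ L w₀ = 0) (hQ0 : 0 ≤ fderiv ℝ (fderiv ℝ L) w₀ v v)
    (hQ : fderiv ℝ (fderiv ℝ L) w₀ v v ≤ 1 / 4) :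
    L w₀ + fderiv ℝ (fderiv ℝ L) w₀ v v / 8 ≤ L (w₀ + v) := by
  have := add_half_le_of_le_hessian_on_segment hL hgrad fun t ht =>
    hsc.quarter_le_hessian_add_smul hQ0 hQ (Ico_subset_Icc_self ht)
  linarith

end SelfConcordantLowerAt

theorem four_mul_mul_sq_le_one_of_rpow_le {τ ζ γ ε s : ℝ} (hτ : 0 < τ) (hζ : 0 < ζ) (hγ : 0 < γ)
    (hs : 0 ≤ s) (hε : ε ≤ τ / (2 ^ (γ + 1) * ζ ^ (γ / 2))) (h : τ / 2 * s ^ γ ≤ ε) :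
    4 * ζ * s ^ 2 ≤ 1 := by
  have hpow : (2 * √ζ * s) ^ γ = 2 ^ γ * ζ ^ (γ / 2) * s ^ γ := by
    rw [Real.mul_rpow (by positivity) hs, Real.mul_rpow (by norm_num) (Real.sqrt_nonneg ζ),
      Real.sqrt_eq_rpow, ← Real.rpow_mul hζ.le, one_div_mul_eq_div]
  have hle : (2 * √ζ * s) ^ γ ≤ 1 := by
    rw [Real.rpow_add two_pos, Real.rpow_one, le_div_iff₀ (by positivity)] at hε
    have hK : (0 : ℝ) < 2 ^ γ * ζ ^ (γ / 2) := by positivity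
    rw [hpow]
    nlinarith [mul_le_mul_of_nonneg_left h hK.le]
  have hbase : 2 * √ζ * s ≤ 1 :=
    (Real.rpow_le_rpow_iff (by positivity) zero_le_one hγ).mp (by rwa [Real.one_rpow])
  calc 4 * ζ * s ^ 2 = (2 * √ζ * s) ^ 2 := by rw [mul_pow, mul_pow, Real.sq_sqrt hζ.le]; ring
    _ ≤ 1 := pow_le_one₀ (by positivity) hbase

theorem regression_oracle_guarantee_general
    (d : ℕ) (μ τ ζ ε : ℝ) (hμ : 0 < μ) (hτ : 0 < τ) (hζ : 0 < ζ)
    (γ : ℝ) (hγ0 : 0 < γ)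
    (L : (Fin d → ℝ) → ℝ) (hL : ContDiff ℝ 2 L)
    (wstar : Fin d → ℝ) (hgrad : fderiv ℝ L wstar = 0)
    (hi : ∀ w : Fin d → ℝ,
      min (μ / 2 * ((w - wstar) ⬝ᵥ (w - wstar)))
        (τ / 2 * Real.sqrt ((w - wstar) ⬝ᵥ (w - wstar)) ^ γ) ≤ L w - L wstar)
    (hii : ∀ x : Fin d → ℝ, fderiv ℝ (fderiv ℝ L) wstar x x ≤ ζ * (x ⬝ᵥ x))
    (hiii : ∀ x : Fin d → ℝ, μ * (x ⬝ᵥ x) ≤ fderiv ℝ (fderiv ℝ L) wstar x x)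
    (hiv : ∀ w : Fin d → ℝ,
      Real.sqrt (fderiv ℝ (fderiv ℝ L) wstar (w - wstar) (w - wstar)) ≤ 1 →
      ∀ x : Fin d → ℝ,
        (1 - Real.sqrt (fderiv ℝ (fderiv ℝ L) wstar (w - wstar) (w - wstar))) ^ 2 *
          fderiv ℝ (fderiv ℝ L) wstar x x ≤ fderiv ℝ (fderiv ℝ L) w x x)
    (what : Fin d → ℝ) (hup : L what - L wstar ≤ ε)
    (hεsmall : ε ≤ min (τ / (2 ^ (γ + 1) * ζ ^ (γ / 2))) (μ / (8 * ζ))) :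
    (what - wstar) ⬝ᵥ (what - wstar) ≤ 8 * ε / μ := by
  set v := what - wstar
  have hv : 0 ≤ v ⬝ᵥ v := dotProduct_self_star_nonneg v
  rw [le_div_iff₀ hμ]
  rcases min_le_iff.mp ((hi what).trans hup) with hquad | hgrowth
  · nlinarith [mul_nonneg hμ.le hv]
  · have hloc := four_mul_mul_sq_le_one_of_rpow_le hτ hζ hγ0 (Real.sqrt_nonneg _)
      (hεsmall.trans (min_le_left _ _)) hgrowth
    rw [Real.sq_sqrt hv] at hloc
    have hQ0 := (mul_nonneg hμ.le hv).trans (hiii v)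
    have hQ : fderiv ℝ (fderiv ℝ L) wstar v v ≤ 1 / 4 := by linarith [hii v]
    have hdescent := SelfConcordantLowerAt.add_div_eight_le hiv hL hgrad hQ0 hQ
    rw [add_sub_cancel] at hdescent
    linarith [hiii v]

/-- Deterministic core of Theorem 5.2 (regression oracle guarantee): under the
growth condition, Hessian bounds `μ‖x‖² ≤ xᵀHx ≤ ζ‖x‖²` at the stationary point
`w*`, the lower-bound half of self-concordance, and a small enough excess risk
`ε` for `ŵ`, one has `‖ŵ − w*‖₂² ≤ 8ε/μ`. -/
theorem regression_oracle_guarantee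
    (d : ℕ) (hd : 1 ≤ d) (μ τ ζ ε : ℝ) (hμ : 0 < μ) (hτ : 0 < τ) (hζ : 0 < ζ)
    (hε : 0 < ε) (γ : ℝ) (hγ0 : 0 < γ) (hγ2 : γ < 2)
    (L : (Fin d → ℝ) → ℝ) (hL : ContDiff ℝ 2 L)
    (wstar : Fin d → ℝ) (hgrad : fderiv ℝ L wstar = 0)
    (hi : ∀ w : Fin d → ℝ,
      min (μ / 2 * ((w - wstar) ⬝ᵥ (w - wstar)))
        (τ / 2 * Real.sqrt ((w - wstar) ⬝ᵥ (w - wstar)) ^ γ) ≤ L w - L wstar)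
    (hii : ∀ x : Fin d → ℝ, fderiv ℝ (fderiv ℝ L) wstar x x ≤ ζ * (x ⬝ᵥ x))
    (hiii : ∀ x : Fin d → ℝ, μ * (x ⬝ᵥ x) ≤ fderiv ℝ (fderiv ℝ L) wstar x x)
    (hiv : ∀ w : Fin d → ℝ,
      Real.sqrt (fderiv ℝ (fderiv ℝ L) wstar (w - wstar) (w - wstar)) ≤ 1 →
      ∀ x : Fin d → ℝ,
        (1 - Real.sqrt (fderiv ℝ (fderiv ℝ L) wstar (w - wstar) (w - wstar))) ^ 2 *
          fderiv ℝ (fderiv ℝ L) wstar x x ≤ fderiv ℝ (fderiv ℝ L) w x x)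
    (what : Fin d → ℝ) (hup : L what - L wstar ≤ ε)
    (hεsmall : ε ≤ min (τ / (2 ^ (γ + 1) * ζ ^ (γ / 2))) (μ / (8 * ζ))) :
    (what - wstar) ⬝ᵥ (what - wstar) ≤ 8 * ε / μ :=
  regression_oracle_guarantee_general d μ τ ζ ε hμ hτ hζ γ hγ0 L hL wstar hgrad hi hii hiii hiv what
    hup hεsmall
end
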